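/- For the semiflow φ of an impulsive dynamical system (X, φ̄, D, I), if x belongs to Ω_φ \ D, then φ̄_t(x) ∈ Ω_φ for all 0 ≤ t ≤ τ₁(x), where φ̄ is the underlying continuous semiflow. -/

import Mathlib

open Set Filter Topology MeasureTheory Function
open scoped NNReal ENNReal

/-- A semiflow on `X`: `φ 0 = id` and `φ (t+s) = φ t ∘ φ s`. -/
def IsSemiflow {X : Type*} (φ : ℝ≥0 → X → X) : Prop :=
  (∀ x, φ 0 x = x) ∧ ∀ (s t : ℝ≥0) (x : X), φ (t + s) x = φ t (φ s x)

/-- `x` is non-wandering for `φ`: every neighborhood `U` of `x` and every `T > 0`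
admit `t ≥ T` with `φ t ⁻¹' U ∩ U ≠ ∅`. -/
def NonWandering {X : Type*} [TopologicalSpace X] (φ : ℝ≥0 → X → X) (x : X) : Prop :=
  ∀ U ∈ nhds x, ∀ T : ℝ≥0, 0 < T → ∃ t : ℝ≥0, T ≤ t ∧ (φ t ⁻¹' U ∩ U).Nonempty

/-- The non-wandering set of `φ`. -/
def NonWanderingSet {X : Type*} [TopologicalSpace X] (φ : ℝ≥0 → X → X) : Set X :=
  {x | NonWandering φ x}

/-- The first impulsive time `τ₁(x)`: the infimum of positive times at which the base
semiflow trajectory of `x` hits `D` (equal to `∞` if it never does). -/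
noncomputable def ImpulsiveTau {X : Type*} (φb : ℝ≥0 → X → X) (D : Set X) (x : X) : ℝ≥0∞ :=
  sInf ((fun t : ℝ≥0 => (t : ℝ≥0∞)) '' {t : ℝ≥0 | 0 < t ∧ φb t x ∈ D})

/-- `φ` is the impulsive semiflow of the impulsive dynamical system `(X, φb, D, I)`:
it is a semiflow which follows `φb` strictly before the first impulsive time, and jumps
via `I` at the first impulsive time.  (Together with the semigroup property this
determines the whole impulsive trajectory.) -/
def IsImpulsiveSemiflow {X : Type*} (φb : ℝ≥0 → X → X) (D : Set X)
    (I : X → X) (φ : ℝ≥0 → X → X) : Prop :=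
  IsSemiflow φ ∧
  (∀ x, ∀ t : ℝ≥0, (t : ℝ≥0∞) < ImpulsiveTau φb D x → φ t x = φb t x) ∧
  (∀ x, ∀ t : ℝ≥0, (t : ℝ≥0∞) = ImpulsiveTau φb D x → φ t x = I (φb t x))

/-! Strictly before the first impulsive time, `φ t` agrees with the continuous map `φb t` on a
whole neighbourhood of `x ∉ D`, because `τ₁` is lower semicontinuous there; conjugating the
recurrence of `x` by this map shows that `φb t x` is non-wandering. The endpoint `t = τ₁(x)` is
a limit of such points, and the non-wandering set is closed. -/

theorem IsSemiflow.comm {X : Type*} {φ : ℝ≥0 → X → X} (hφ : IsSemiflow φ) (s t : ℝ≥0) (x : X) :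
    φ s (φ t x) = φ t (φ s x) := by
  rw [← hφ.2, ← hφ.2, add_comm]

theorem isClosed_nonWanderingSet {X : Type*} [TopologicalSpace X] (φ : ℝ≥0 → X → X) :
    IsClosed (NonWanderingSet φ) := by
  rw [← closure_subset_iff_isClosed]
  intro x hx U hU T hT
  obtain ⟨z, hzU, hz⟩ := mem_closure_iff_nhds.mp hx (interior U) (interior_mem_nhds.mpr hU)
  exact hz U (mem_interior_iff_mem_nhds.mp hzU) T hT

theorem NonWandering.of_eqOn {X : Type*} [TopologicalSpace X] {φ : ℝ≥0 → X → X}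
    (hφ : IsSemiflow φ) {x : X} (hx : NonWandering φ x) {t : ℝ≥0} {g : X → X}
    (hg : ContinuousAt g x) {W : Set X} (hW : W ∈ 𝓝 x) (heq : EqOn (φ t) g W) :
    NonWandering φ (g x) := by
  intro U hU T hT
  obtain ⟨s, hsT, w, ⟨hsw, hgsw⟩, hw, hgw⟩ := hx _ (inter_mem hW (hg.preimage_mem_nhds hU)) T hT
  refine ⟨s, hsT, φ t w, ?_, by rwa [heq hw]⟩
  change φ s (φ t w) ∈ U
  rwa [hφ.comm, heq hsw]

section ImpulsiveTau

variable {X : Type*} {φb : ℝ≥0 → X → X} {D : Set X}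

theorem impulsiveTau_le {x : X} {s : ℝ≥0} (hs : 0 < s) (hsD : φb s x ∈ D) :
    ImpulsiveTau φb D x ≤ s :=
  sInf_le ⟨s, ⟨hs, hsD⟩, rfl⟩

theorem le_impulsiveTau_iff {x : X} {a : ℝ≥0∞} :
    a ≤ ImpulsiveTau φb D x ↔ ∀ s : ℝ≥0, 0 < s → φb s x ∈ D → a ≤ s := by
  simp only [ImpulsiveTau, le_sInf_iff, forall_mem_image, mem_ofPred_eq, and_imp]

theorem lowerSemicontinuousAt_impulsiveTau [TopologicalSpace X] (hφb : IsSemiflow φb)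
    (hc : Continuous fun p : ℝ≥0 × X => φb p.1 p.2) (hD : IsClosed D) {x : X} (hx : x ∉ D) :
    LowerSemicontinuousAt (ImpulsiveTau φb D) x := by
  intro a ha
  obtain ⟨t, hat, htτ⟩ := ENNReal.lt_iff_exists_nnreal_btwn.mp ha
  have horbit : ∀ s ∈ Icc 0 t, φb s x ∉ D := by
    rintro s ⟨-, hst⟩ hsD
    rcases eq_zero_or_pos s with rfl | hs
    · exact hx (hφb.1 x ▸ hsD)
    · exact (impulsiveTau_le hs hsD).trans (ENNReal.coe_le_coe.mpr hst) |>.not_gt htτ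
  have hopen : IsOpen {p : X × ℝ≥0 | φb p.2 p.1 ∉ D} :=
    (hD.preimage (hc.comp continuous_swap)).isOpen_compl
  have hnear : ∀ᶠ z in 𝓝 x, ∀ s ∈ Icc 0 t, φb s z ∉ D :=
    isCompact_Icc.eventually_forall_of_forall_eventually fun s hs =>
      hopen.mem_nhds (horbit s hs)
  filter_upwards [hnear] with z hz
  refine hat.trans_le (le_impulsiveTau_iff.mpr fun s hs hsD => ?_)
  by_contra! hst
  exact hz s ⟨zero_le, (ENNReal.coe_lt_coe.mp hst).le⟩ hsD

end ImpulsiveTau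

theorem IsImpulsiveSemiflow.mem_nonWanderingSet_of_lt_impulsiveTau {X : Type*}
    [TopologicalSpace X] {φb : ℝ≥0 → X → X} {D : Set X} {I : X → X} {φ : ℝ≥0 → X → X}
    (hφ : IsImpulsiveSemiflow φb D I φ) (hφb : IsSemiflow φb)
    (hc : Continuous fun p : ℝ≥0 × X => φb p.1 p.2) (hD : IsClosed D)
    {x : X} (hxΩ : x ∈ NonWanderingSet φ) (hxD : x ∉ D) {t : ℝ≥0}
    (ht : (t : ℝ≥0∞) < ImpulsiveTau φb D x) : φb t x ∈ NonWanderingSet φ :=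
  NonWandering.of_eqOn hφ.1 hxΩ (hc.comp (Continuous.prodMk_right t)).continuousAt
    (lowerSemicontinuousAt_impulsiveTau hφb hc hD hxD _ ht) fun _ hz => hφ.2.1 _ _ hz

theorem stmt9_general {X : Type*} [MetricSpace X]
    (φb : ℝ≥0 → X → X) (D : Set X) (I : X → X) (φ : ℝ≥0 → X → X)
    (hφb : IsSemiflow φb) (hc : Continuous fun p : ℝ≥0 × X => φb p.1 p.2)
    (hD : IsCompact D)
    (hφ : IsImpulsiveSemiflow φb D I φ) :
    ∀ x ∈ NonWanderingSet φ \ D, ∀ t : ℝ≥0,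
      (t : ℝ≥0∞) ≤ ImpulsiveTau φb D x → φb t x ∈ NonWanderingSet φ := by
  rintro x ⟨hxΩ, hxD⟩ t ht
  have hbefore : ∀ s : ℝ≥0, (s : ℝ≥0∞) < ImpulsiveTau φb D x → φb s x ∈ NonWanderingSet φ :=
    fun s hs => hφ.mem_nonWanderingSet_of_lt_impulsiveTau hφb hc hD.isClosed hxΩ hxD hs
  rcases ht.lt_or_eq with hlt | heq
  · exact hbefore t hlt
  rcases eq_zero_or_pos t with rfl | ht0
  · rwa [hφb.1]
  have horbit : Continuous fun s => φb s x := hc.comp (Continuous.prodMk_left x)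
  have hmem : t ∈ closure (Iio t) := by
    rw [closure_Iio' (a := t) ⟨0, ht0⟩]
    exact self_mem_Iic
  refine (isClosed_nonWanderingSet φ).closure_subset_iff.mpr ?_
    (image_closure_subset_closure_image horbit ⟨t, hmem, rfl⟩)
  rintro _ ⟨s, hs, rfl⟩
  exact hbefore s (heq ▸ ENNReal.coe_lt_coe.mpr hs)

/-- For the impulsive semiflow `φ` of `(X, φb, D, I)`: if `x ∈ Ω_φ \ D`, then
`φb t x ∈ Ω_φ` for all `0 ≤ t ≤ τ₁(x)`. -/
theorem stmt9 {X : Type*} [MetricSpace X] [CompactSpace X]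
    (φb : ℝ≥0 → X → X) (D : Set X) (I : X → X) (φ : ℝ≥0 → X → X)
    (hφb : IsSemiflow φb) (hc : Continuous fun p : ℝ≥0 × X => φb p.1 p.2)
    (hD : IsCompact D) (hI : ContinuousOn I D)
    (hpos : ∀ x, 0 < ImpulsiveTau φb D x)
    (hφ : IsImpulsiveSemiflow φb D I φ) :
    ∀ x ∈ NonWanderingSet φ \ D, ∀ t : ℝ≥0,
      (t : ℝ≥0∞) ≤ ImpulsiveTau φb D x → φb t x ∈ NonWanderingSet φ :=
  stmt9_general φb D I φ hφb hc hD hφ
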